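/- Let z = (F ←γ G →μ F*, θ̄) be an ε-quadratic split preformation which is elementary with respect to a finitely generated free submodule j : U ↪ G. Then the following is equivalent to elementariness: the sequence 0 → U →(μj) F* →((γj)*) U* → 0 is exact and θ̄ restricted to U vanishes. That is, z is elementary with respect to U (meaning: j*γ*μj = 0 and θ̄j = 0; γj and μj are injective with images direct summands U_0 ⊆ F and U_1 ⊆ F*; and the map F*/U_1 → U_0*, f ↦ f|U_0, is an isomorphism) if and only if 0 → U → F* → U* → 0 as above is exact and θ̄|U = 0. -/

import Mathlib

/-- The dual `Hom_Λ(M, Λ)` of a left module over a ring with involution,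
made into a left `Λ`-module via `(a • f) x = f x * star a`. -/
def SDual (Λ : Type) [Ring Λ] [StarRing Λ] (M : Type) [AddCommGroup M] [Module Λ M] : Type :=
  M →ₗ[Λ] Λ

namespace SDual

variable {Λ : Type} [Ring Λ] [StarRing Λ] {M N : Type} [AddCommGroup M] [Module Λ M]
  [AddCommGroup N] [Module Λ N]

instance : AddCommGroup (SDual Λ M) := inferInstanceAs (AddCommGroup (M →ₗ[Λ] Λ))

instance : FunLike (SDual Λ M) M Λ where
  coe f := ⇑(show M →ₗ[Λ] Λ from f)
  coe_injective := fun f g h => by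
    have : (show M →ₗ[Λ] Λ from f) = (show M →ₗ[Λ] Λ from g) := DFunLike.coe_injective h
    exact this

@[simp] theorem add_apply (f g : SDual Λ M) (x : M) : (f + g) x = f x + g x := rfl
@[simp] theorem zero_apply (x : M) : (0 : SDual Λ M) x = 0 := rfl
@[simp] theorem neg_apply (f : SDual Λ M) (x : M) : (-f) x = -(f x) := rfl
@[simp] theorem sub_apply (f g : SDual Λ M) (x : M) : (f - g) x = f x - g x := rfl

@[simp] theorem map_add (f : SDual Λ M) (x y : M) : f (x + y) = f x + f y :=
  (show M →ₗ[Λ] Λ from f).map_add x y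

@[simp] theorem map_smul (f : SDual Λ M) (a : Λ) (x : M) : f (a • x) = a * f x :=
  (show M →ₗ[Λ] Λ from f).map_smul a x

instance : SMul Λ (SDual Λ M) where
  smul a f := show M →ₗ[Λ] Λ from
    { toFun := fun x => f x * star a
      map_add' := fun x y => by simp [add_mul]
      map_smul' := fun c x => by simp [mul_assoc] }

@[simp] theorem smul_apply (a : Λ) (f : SDual Λ M) (x : M) : (a • f) x = f x * star a := rfl

instance : Module Λ (SDual Λ M) where
  one_smul f := DFunLike.ext _ _ fun x => by simp
  mul_smul a b f := DFunLike.ext _ _ fun x => by simp [star_mul, mul_assoc]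
  smul_zero a := DFunLike.ext _ _ fun x => by simp
  smul_add a f g := DFunLike.ext _ _ fun x => by simp [add_mul]
  add_smul a b f := DFunLike.ext _ _ fun x => by simp [star_add, mul_add]
  zero_smul f := DFunLike.ext _ _ fun x => by simp

/-- Build an element of `SDual Λ M` from a function. -/
def ofFun (g : M → Λ) (h1 : ∀ x y, g (x + y) = g x + g y)
    (h2 : ∀ (a : Λ) (x : M), g (a • x) = a * g x) : SDual Λ M :=
  show M →ₗ[Λ] Λ from
    { toFun := g
      map_add' := h1
      map_smul' := fun a x => by simp [h2, smul_eq_mul] }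

@[simp] theorem ofFun_apply (g : M → Λ) (h1 : ∀ x y, g (x + y) = g x + g y)
    (h2 : ∀ (a : Λ) (x : M), g (a • x) = a * g x) (x : M) : ofFun g h1 h2 x = g x := rfl

/-- The `ε`-twisted dual `T_ε θ` of a form `θ : M → M^*`:
`(T_ε θ) x y = ε * star (θ y x)`; for f.g. projective `M` this corresponds to
`εθ^*` under `M ≅ M^{**}`. -/
def Tform (ε : Λ) (hc : ∀ a : Λ, ε * a = a * ε) (θ : M →ₗ[Λ] SDual Λ M) :
    M →ₗ[Λ] SDual Λ M where
  toFun x := ofFun (fun y => ε * star (θ y x))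
    (fun y y' => by
      show ε * star (θ (y + y') x) = ε * star (θ y x) + ε * star (θ y' x)
      rw [_root_.map_add θ y y', add_apply, star_add, mul_add])
    (fun a y => by
      show ε * star (θ (a • y) x) = a * (ε * star (θ y x))
      rw [_root_.map_smul θ a y, smul_apply, star_mul, star_star, ← mul_assoc, hc a, mul_assoc])
  map_add' x x' := DFunLike.ext _ _ fun y => by simp [star_add, mul_add]
  map_smul' a x := by
    simp only [RingHom.id_apply]
    exact DFunLike.ext _ _ fun y => by simp [star_mul, mul_assoc]

@[simp] theorem Tform_apply (ε : Λ) (hc : ∀ a : Λ, ε * a = a * ε) (θ : M →ₗ[Λ] SDual Λ M)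
    (x y : M) : Tform ε hc θ x y = ε * star (θ y x) := rfl

end SDual

namespace SDual

variable {Λ : Type} [Ring Λ] [StarRing Λ] {M N : Type} [AddCommGroup M] [Module Λ M]
  [AddCommGroup N] [Module Λ N]

/-- The pullback (dual map) `u^* : M^* → N^*` along a linear map `u : N → M`,
given by `f ↦ f ∘ u`. -/
def pullback (u : N →ₗ[Λ] M) : SDual Λ M →ₗ[Λ] SDual Λ N where
  toFun f := ofFun (fun x => f (u x)) (fun x y => by simp) (fun a x => by simp)
  map_add' f g := DFunLike.ext _ _ fun x => by simp
  map_smul' a f := by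
    simp only [RingHom.id_apply]
    exact DFunLike.ext _ _ fun x => by simp

@[simp] theorem pullback_apply (u : N →ₗ[Λ] M) (f : SDual Λ M) (x : N) :
    pullback u f x = f (u x) := rfl

end SDual

/-- The additive subgroup `{b - ε * star b | b ∈ Λ}` of `Λ`. -/
def qSub (Λ : Type) [Ring Λ] [StarRing Λ] (ε : Λ) : AddSubgroup Λ :=
  AddMonoidHom.range
    { toFun := fun b => b - ε * star b
      map_zero' := by simp
      map_add' := fun a b => by
        show a + b - ε * star (a + b) = (a - ε * star a) + (b - ε * star b)
        rw [star_add, mul_add]; abel }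

/-- `Q_ε(Λ) = Λ / {b - ε * star b}`; in particular `QL Λ (-ε)` is `Q_{−ε}(Λ)`. -/
abbrev QL (Λ : Type) [Ring Λ] [StarRing Λ] (ε : Λ) : Type := Λ ⧸ qSub Λ ε

namespace SDual

section Aux

variable {Λ : Type} [Ring Λ] [StarRing Λ] {M N P : Type} [AddCommGroup M] [Module Λ M]
  [AddCommGroup N] [Module Λ N] [AddCommGroup P] [Module Λ P]

theorem map_sub' (f : SDual Λ M) (x y : M) : f (x - y) = f x - f y :=
  (show M →ₗ[Λ] Λ from f).map_sub x y

theorem apply_sum {α : Type} (f : SDual Λ M) (s : Finset α) (x : α → M) :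
    f (∑ i ∈ s, x i) = ∑ i ∈ s, f (x i) :=
  map_sum (show M →ₗ[Λ] Λ from f) x s

theorem sum_apply' {α : Type} (s : Finset α) (f : α → SDual Λ M) (x : M) :
    (∑ i ∈ s, f i) x = ∑ i ∈ s, f i x := by
  classical
  refine Finset.induction_on s (by simp) fun a s ha ih => ?_
  rw [Finset.sum_insert ha, Finset.sum_insert ha, add_apply, ih]

theorem pullback_comp (u : N →ₗ[Λ] M) (v : P →ₗ[Λ] N) :
    (pullback (u.comp v) : SDual Λ M →ₗ[Λ] SDual Λ P) = (pullback v).comp (pullback u) :=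
  LinearMap.ext fun f => DFunLike.ext _ _ fun x => rfl

theorem pullback_injective_of_surjective (u : N →ₗ[Λ] M) (hu : Function.Surjective u) :
    Function.Injective (pullback (Λ := Λ) u) := by
  intro f g h
  refine DFunLike.ext _ _ fun x => ?_
  obtain ⟨y, rfl⟩ := hu x
  exact DFunLike.congr_fun h y

theorem pullback_surjective_of_retraction (u : N →ₗ[Λ] M) (r : M →ₗ[Λ] N)
    (h : r.comp u = LinearMap.id) : Function.Surjective (pullback (Λ := Λ) u) := by
  intro g
  refine ⟨pullback r g, DFunLike.ext _ _ fun x => ?_⟩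
  have hx : r (u x) = x := LinearMap.congr_fun h x
  simp [hx]

/-- Pullback along a linear equivalence, as a linear equivalence. -/
noncomputable def pullbackEquiv (e : N ≃ₗ[Λ] M) : SDual Λ M ≃ₗ[Λ] SDual Λ N :=
  LinearEquiv.ofLinear (pullback (e : N →ₗ[Λ] M)) (pullback (e.symm : M →ₗ[Λ] N))
    (LinearMap.ext fun f => DFunLike.ext _ _ fun x => by simp)
    (LinearMap.ext fun f => DFunLike.ext _ _ fun x => by simp)

@[simp] theorem pullbackEquiv_apply (e : N ≃ₗ[Λ] M) (f : SDual Λ M) (x : N) :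
    pullbackEquiv e f x = f (e x) := rfl

/-- The evaluation map into the double dual, `x ↦ (f ↦ star (f x))`. -/
def evMap : M →ₗ[Λ] SDual Λ (SDual Λ M) where
  toFun x := ofFun (fun f => star (f x))
    (fun f g => by simp [star_add])
    (fun a f => by simp [star_mul])
  map_add' x y := DFunLike.ext _ _ fun f => by simp [star_add]
  map_smul' a x := by
    simp only [RingHom.id_apply]
    exact DFunLike.ext _ _ fun f => by simp [star_mul]

@[simp] theorem evMap_apply (x : M) (f : SDual Λ M) :
    (evMap x : SDual Λ (SDual Λ M)) f = star (f x) := rfl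

theorem evMap_naturality (u : M →ₗ[Λ] N) :
    (pullback (pullback u)).comp (evMap : M →ₗ[Λ] SDual Λ (SDual Λ M)) =
      (evMap : N →ₗ[Λ] SDual Λ (SDual Λ N)).comp u :=
  LinearMap.ext fun x => DFunLike.ext _ _ fun f => rfl

/-- The coordinate functional of a basis, as an element of `SDual`. -/
noncomputable def coordS {ι : Type} (b : Module.Basis ι Λ M) (i : ι) : SDual Λ M :=
  show M →ₗ[Λ] Λ from b.coord i

@[simp] theorem coordS_apply {ι : Type} (b : Module.Basis ι Λ M) (i : ι) (x : M) :
    coordS b i x = b.repr x i := b.coord_apply i x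

theorem ext_basis {ι : Type} (b : Module.Basis ι Λ M) {f g : SDual Λ M}
    (h : ∀ i, f (b i) = g (b i)) : f = g :=
  Module.Basis.ext b h

theorem sum_coord_smul {ι : Type} [Fintype ι] (b : Module.Basis ι Λ M) (f : SDual Λ M) :
    (∑ i, star (f (b i)) • coordS b i) = f := by
  classical
  refine ext_basis b fun j => ?_
  rw [sum_apply']
  have : ∀ i, (star (f (b i)) • coordS b i) (b j) = if j = i then f (b i) else 0 := by
    intro i
    rw [smul_apply, coordS_apply, Module.Basis.repr_self, Finsupp.single_apply, star_star]
    split <;> simp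
  rw [Finset.sum_congr rfl fun i _ => this i]
  simp

theorem exists_section {ι : Type} [Fintype ι] (b : Module.Basis ι Λ M) {A : Type} [AddCommGroup A]
    [Module Λ A] (π : A →ₗ[Λ] SDual Λ M) (hπ : Function.Surjective π) :
    ∃ s : SDual Λ M →ₗ[Λ] A, π.comp s = LinearMap.id := by
  choose pre hpre using fun i => hπ (coordS b i)
  refine ⟨{ toFun := fun f => ∑ i, star (f (b i)) • pre i
            map_add' := fun f g => by simp [star_add, add_smul, Finset.sum_add_distrib]
            map_smul' := fun a f => by
              simp [star_mul, mul_smul, Finset.smul_sum] }, ?_⟩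
  refine LinearMap.ext fun f => ?_
  show π (∑ i, star (f (b i)) • pre i) = f
  rw [map_sum]
  simp only [_root_.map_smul, hpre]
  exact sum_coord_smul b f

theorem isCompl_ker_range {A B : Type} [AddCommGroup A] [Module Λ A] [AddCommGroup B]
    [Module Λ B] (π : A →ₗ[Λ] B) (s : B →ₗ[Λ] A) (h : π.comp s = LinearMap.id) :
    IsCompl (LinearMap.ker π) (LinearMap.range s) := by
  have hs : ∀ y, π (s y) = y := fun y => LinearMap.congr_fun h y
  constructor
  · rw [disjoint_iff, eq_bot_iff]
    rintro x ⟨hx, y, rfl⟩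
    have hy : y = 0 := by rw [← hs y]; exact hx
    rw [hy, map_zero]
    exact Submodule.zero_mem ⊥
  · rw [codisjoint_iff, eq_top_iff]
    intro x _
    refine Submodule.mem_sup.2 ⟨x - s (π x), ?_, s (π x), ⟨π x, rfl⟩, by abel⟩
    simp [LinearMap.mem_ker, map_sub, hs]

theorem evMap_bijective {ι : Type} [Fintype ι] (b : Module.Basis ι Λ M) :
    Function.Bijective (evMap : M →ₗ[Λ] SDual Λ (SDual Λ M)) := by
  constructor
  · intro x y hxy
    refine b.ext_elem_iff.2 fun i => ?_
    have h1 : star (coordS b i x) = star (coordS b i y) := DFunLike.congr_fun hxy (coordS b i)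
    have := congrArg star h1
    simpa using this
  · intro Ψ
    refine ⟨∑ i, star (Ψ (coordS b i)) • b i, DFunLike.ext _ _ fun f => ?_⟩
    rw [evMap_apply, apply_sum]
    have h1 : ∀ i, f (star (Ψ (coordS b i)) • b i) = star (Ψ (coordS b i)) * f (b i) :=
      fun i => map_smul f _ _
    rw [Finset.sum_congr rfl fun i _ => h1 i, star_sum]
    have h2 : ∀ i, star (star (Ψ (coordS b i)) * f (b i)) = star (f (b i)) * Ψ (coordS b i) := by
      intro i; rw [star_mul, star_star]
    rw [Finset.sum_congr rfl fun i _ => h2 i]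
    conv_rhs => rw [← sum_coord_smul b f]
    rw [apply_sum Ψ]
    refine Finset.sum_congr rfl fun i _ => ?_
    exact (map_smul Ψ _ _).symm

theorem ker_surj_transfer (gj : N →ₗ[Λ] M) (hinj : Function.Injective gj) :
    LinearMap.ker (pullback (Λ := Λ) (LinearMap.range gj).subtype) =
      LinearMap.ker (pullback gj) ∧
    (Function.Surjective (pullback (Λ := Λ) (LinearMap.range gj).subtype) ↔
      Function.Surjective (pullback gj)) := by
  set e := LinearEquiv.ofInjective gj hinj with he
  have hcomp : (LinearMap.range gj).subtype.comp (e : N →ₗ[Λ] LinearMap.range gj) = gj := by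
    refine LinearMap.ext fun x => ?_
    simp [he, LinearEquiv.ofInjective_apply]
  have hp : (pullback gj : SDual Λ M →ₗ[Λ] SDual Λ N) =
      ((pullbackEquiv e : SDual Λ (LinearMap.range gj) ≃ₗ[Λ] SDual Λ N) :
        SDual Λ (LinearMap.range gj) →ₗ[Λ] SDual Λ N).comp
        (pullback (LinearMap.range gj).subtype) :=
    LinearMap.ext fun f => DFunLike.ext _ _ fun x => by
      show f (gj x) = f ((LinearMap.range gj).subtype (e x))
      exact (congrArg f (LinearMap.congr_fun hcomp x)).symm
  constructor
  · rw [hp, LinearMap.ker_comp,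
      LinearMap.ker_eq_bot.2 (pullbackEquiv e).injective, Submodule.comap_bot]
  · constructor
    · intro hs φ
      obtain ⟨f, hf⟩ := hs ((pullbackEquiv e).symm φ)
      refine ⟨f, ?_⟩
      calc pullback gj f
          = (pullbackEquiv e) ((pullback (LinearMap.range gj).subtype) f) :=
            LinearMap.congr_fun hp f
        _ = (pullbackEquiv e) ((pullbackEquiv e).symm φ) := by rw [hf]
        _ = φ := (pullbackEquiv e).apply_symm_apply φ
    · intro hs ψ
      obtain ⟨f, hf⟩ := hs ((pullbackEquiv e) ψ)
      refine ⟨f, (pullbackEquiv e).injective ?_⟩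
      calc (pullbackEquiv e) ((pullback (LinearMap.range gj).subtype) f)
          = pullback gj f := (LinearMap.congr_fun hp f).symm
        _ = (pullbackEquiv e) ψ := hf

end Aux

end SDual

/-- Let `z = (F ←γ G →μ F*, θ̄)` be an `ε`-quadratic split
preformation over a weakly finite ring `Λ` with involution, and let
`j : U ↪ G` be a f.g. free submodule.  Then Kreck's definition of elementariness
with respect to `U` — namely `j*γ*μj = 0` and `θ̄j = 0`; `γj` and `μj` injective
with images `U₀ ⊆ F`, `U₁ ⊆ F*` direct summands; and the induced map
`F*/U₁ → U₀*`, `f ↦ f|U₀`, an isomorphism (rendered as: the restriction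
`F* → U₀*` has kernel exactly `U₁` and is surjective) — is equivalent to:
the sequence `0 → U →(μj) F* →((γj)*) U* → 0` is exact and `θ̄|U = 0`.
Here `θ̄ : G → Q_{−ε}(Λ)` is the quadratic refinement of the `(−ε)`-symmetric
form `γ*μ`. -/
theorem stmt_4 (Λ : Type) [Ring Λ] [StarRing Λ]
    (hwf : ∀ (k : ℕ) (a b : Matrix (Fin k) (Fin k) Λ), a * b = 1 → b * a = 1)
    (ε : Λ) (hε : ε = 1 ∨ ε = -1)
    (F G : Type) [AddCommGroup F] [Module Λ F] [Module.Free Λ F] [Module.Finite Λ F]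
    [AddCommGroup G] [Module Λ G] [Module.Finite Λ G]
    (γ : G →ₗ[Λ] F) (μ : G →ₗ[Λ] SDual Λ F)
    (hsymm : ∀ g h : G, μ g (γ h) = -(ε * star (μ h (γ g))))
    (θb : G → QL Λ (-ε))
    (U : Submodule Λ G) [Module.Free Λ U] [Module.Finite Λ U] :
    -- Kreck's definition of `z` elementary with respect to `U`:
    ((∀ u ∈ U, ∀ u' ∈ U, μ u (γ u') = 0) ∧
     (∀ u ∈ U, θb u = 0) ∧
     Function.Injective (γ.comp U.subtype) ∧
     Function.Injective (μ.comp U.subtype) ∧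
     (∃ W, IsCompl (LinearMap.range (γ.comp U.subtype)) W) ∧
     (∃ W, IsCompl (LinearMap.range (μ.comp U.subtype)) W) ∧
     LinearMap.ker (SDual.pullback (LinearMap.range (γ.comp U.subtype)).subtype)
        = LinearMap.range (μ.comp U.subtype) ∧
     Function.Surjective (SDual.pullback (LinearMap.range (γ.comp U.subtype)).subtype))
    ↔
    -- exactness of 0 → U →(μj) F* →((γj)*) U* → 0 together with θ̄|U = 0:
    ((∀ u ∈ U, θb u = 0) ∧
     Function.Injective (μ.comp U.subtype) ∧
     LinearMap.range (μ.comp U.subtype) = LinearMap.ker (SDual.pullback (γ.comp U.subtype)) ∧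
     Function.Surjective (SDual.pullback (γ.comp U.subtype))) := by
  classical
  constructor
  · rintro ⟨hd, hθ, hgjinj, hmjinj, -, -, hkerU0, hsurjU0⟩
    obtain ⟨hker, hsurjiff⟩ := SDual.ker_surj_transfer (γ.comp U.subtype) hgjinj
    exact ⟨hθ, hmjinj, hkerU0.symm.trans hker, hsurjiff.mp hsurjU0⟩
  · rintro ⟨hθ, hmjinj, hrk, hsurj⟩
    set gj := γ.comp U.subtype with hgjdef
    set mj := μ.comp U.subtype with hmjdef
    let bU := Module.Free.chooseBasis Λ ↥U
    let bF := Module.Free.chooseBasis Λ F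
    have hevU := SDual.evMap_bijective bU
    have hevF := SDual.evMap_bijective bF
    have hnat : ∀ w : ↥U, SDual.pullback (SDual.pullback gj) (SDual.evMap w)
        = SDual.evMap (gj w) := fun w => LinearMap.congr_fun (SDual.evMap_naturality gj) w
    -- the composite form vanishes on U
    have hd0 : ∀ u u' : ↥U, μ ↑u (γ ↑u') = 0 := by
      intro u u'
      have h1 : mj u ∈ LinearMap.ker (SDual.pullback gj) :=
        hrk ▸ LinearMap.mem_range_self mj u
      have h2 : SDual.pullback gj (mj u) = 0 := h1
      have h3 := DFunLike.congr_fun h2 u'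
      exact h3
    -- γj is injective
    have hpp : Function.Injective (SDual.pullback (SDual.pullback gj)) :=
      SDual.pullback_injective_of_surjective (SDual.pullback gj) hsurj
    have hgjinj : Function.Injective gj := by
      intro u v huv
      apply hevU.1
      apply hpp
      rw [hnat u, hnat v, huv]
    -- a section of the surjection F^* → U^*
    obtain ⟨s, hs⟩ := SDual.exists_section bU (SDual.pullback gj) hsurj
    have hπs : ∀ y, SDual.pullback gj (s y) = y := fun y => LinearMap.congr_fun hs y
    have hsub : ∀ f : SDual Λ F,
        f - s (SDual.pullback gj f) ∈ LinearMap.range mj := by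
      intro f
      rw [hrk, LinearMap.mem_ker, map_sub, hπs, sub_self]
    -- a retraction of μj
    set eU1 := LinearEquiv.ofInjective mj hmjinj with heU1
    set r : SDual Λ F →ₗ[Λ] ↥U :=
      (eU1.symm : ↥(LinearMap.range mj) →ₗ[Λ] ↥U).comp
        (LinearMap.codRestrict (LinearMap.range mj)
          (LinearMap.id - s.comp (SDual.pullback gj)) (fun f => hsub f)) with hrdef
    have hretr : r.comp mj = LinearMap.id := by
      refine LinearMap.ext fun u => ?_
      have hmem : mj u ∈ LinearMap.ker (SDual.pullback gj) :=
        hrk ▸ LinearMap.mem_range_self mj u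
      have hz : SDual.pullback gj (mj u) = 0 := hmem
      have hcr : LinearMap.codRestrict (LinearMap.range mj)
          (LinearMap.id - s.comp (SDual.pullback gj)) (fun f => hsub f) (mj u) = eU1 u := by
        apply Subtype.ext
        show mj u - s (SDual.pullback gj (mj u)) = ↑(eU1 u)
        rw [hz, map_zero, sub_zero, heU1, LinearEquiv.ofInjective_apply]
      show eU1.symm (LinearMap.codRestrict (LinearMap.range mj)
          (LinearMap.id - s.comp (SDual.pullback gj)) (fun f => hsub f) (mj u)) = u
      rw [hcr, LinearEquiv.symm_apply_apply]
    have hmjsurj : Function.Surjective (SDual.pullback mj) :=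
      SDual.pullback_surjective_of_retraction mj r hretr
    -- the map δ : F → U^*
    set δ : F →ₗ[Λ] SDual Λ ↥U := (SDual.pullback mj).comp SDual.evMap with hδdef
    have hδsurj : Function.Surjective δ := hmjsurj.comp hevF.2
    have hkerδ : LinearMap.ker δ = LinearMap.range gj := by
      apply le_antisymm
      · intro x hx
        have hΨ : SDual.pullback mj (SDual.evMap x) = 0 := hx
        have hΨfix : ∀ f : SDual Λ F,
            SDual.evMap x f = SDual.evMap x (s (SDual.pullback gj f)) := by
          intro f
          have h0 : SDual.evMap (Λ := Λ) (M := F) x (f - s (SDual.pullback gj f)) = 0 := by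
            obtain ⟨u, hu⟩ := hsub f
            rw [← hu]
            exact DFunLike.congr_fun hΨ u
          rw [SDual.map_sub'] at h0
          exact (sub_eq_zero.mp h0)
        obtain ⟨u, hu⟩ := hevU.2 (SDual.pullback s (SDual.evMap (Λ := Λ) (M := F) x))
        have hx2 : SDual.evMap (Λ := Λ) (M := F) x = SDual.evMap (Λ := Λ) (M := F) (gj u) := by
          rw [← hnat u, hu]
          refine DFunLike.ext _ _ fun f => hΨfix f
        exact ⟨u, (hevF.1 hx2).symm⟩
      · rintro x ⟨u, rfl⟩
        show δ (gj u) = 0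
        refine DFunLike.ext _ _ fun u' => ?_
        show star (μ (↑u') (γ ↑u)) = 0
        rw [hd0 u' u, star_zero]
    obtain ⟨s', hs'⟩ := SDual.exists_section bU δ hδsurj
    have hc1 : IsCompl (LinearMap.range gj) (LinearMap.range s') := by
      rw [← hkerδ]; exact SDual.isCompl_ker_range δ s' hs'
    have hc2 : IsCompl (LinearMap.range mj) (LinearMap.range s) := by
      rw [hrk]; exact SDual.isCompl_ker_range (SDual.pullback gj) s hs
    obtain ⟨hker, hsurjiff⟩ := SDual.ker_surj_transfer gj hgjinj
    exact ⟨fun u hu u' hu' => hd0 ⟨u, hu⟩ ⟨u', hu'⟩, hθ, hgjinj, hmjinj, ⟨_, hc1⟩, ⟨_, hc2⟩,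
      hker.trans hrk.symm, hsurjiff.mpr hsurj⟩
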